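/- Let p : Fin m → ℕ → ℝ and g(τ) = Π_{i=1}^{m} Π_{j=τ_{i-1}+1}^{τ_i} p(i, j) · Π_{i=1}^{m-1} w(τ_i), defined on changepoint sequences. Define L(k,t) = Σ_{τ ∈ T(k,t)} g(τ), L(0,t) = 0, and R(k,t) = Π_{j=k}^{m-1} [p(j, b(j,t)+1) w(b(j,t)+1)] / [p(j+1, b(j,t)+1) w(b(j,t))]. Assuming p and w are nonzero where used, then for 1 ≤ k < m and m ≤ t < n: L(k,t) = L(k-1,t) + L(k,t-1) · R(k,t-1). -/

import Mathlib

/-- Changepoint sequences: strictly increasing `τ_0 = 0 < τ_1 < ... < τ_m = n`. -/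
def CP (n m : ℕ) : Set (Fin (m + 1) → ℕ) :=
  {τ | StrictMono τ ∧ τ 0 = 0 ∧ τ (Fin.last m) = n}

open Fin.NatCast in
/-- `T n m k t`: changepoint sequences with `τ (m-1) = t` whose entries at
indices `k, k+1, ..., m-1` are consecutive. -/
def T (n m k t : ℕ) : Set (Fin (m + 1) → ℕ) :=
  {τ | τ ∈ CP n m ∧ τ ((m - 1 : ℕ) : Fin (m + 1)) = t ∧
    ∀ i : ℕ, k ≤ i → i + 1 < m →
      τ ((i + 1 : ℕ) : Fin (m + 1)) = τ ((i : ℕ) : Fin (m + 1)) + 1}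

/-- `b m j t = t - ((m-1) - j)`. -/
def b (m j t : ℕ) : ℕ := t - ((m - 1) - j)

/-- The unnormalised weight of a changepoint sequence:
`g τ = Π_{i=1}^{m} Π_{j=τ_{i-1}+1}^{τ_i} p i j  ·  Π_{i=1}^{m-1} w (τ i)`,
where `p i j` abstracts `P(x_j | x_{1:j-1}, z_i)`. -/
noncomputable def gfun (m : ℕ) (p : ℕ → ℕ → ℝ) (w : ℕ → ℝ)
    (τ : Fin (m + 1) → ℕ) : ℝ :=
  (∏ i : Fin m, ∏ j ∈ Finset.Ioc (τ i.castSucc) (τ i.succ), p ((i : ℕ) + 1) j) *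
    ∏ i ∈ Finset.Ioo (0 : Fin (m + 1)) (Fin.last m), w (τ i)

/-- `R k t = Π_{j=k}^{m-1} [p j (b j t + 1) · w (b j t + 1)] /
[p (j+1) (b j t + 1) · w (b j t)]` (so `R m t = 1`, the empty product). -/
noncomputable def Rfun (m : ℕ) (p : ℕ → ℕ → ℝ) (w : ℕ → ℝ) (k t : ℕ) : ℝ :=
  ∏ j ∈ Finset.Ico k m,
    p j (b m j t + 1) * w (b m j t + 1) / (p (j + 1) (b m j t + 1) * w (b m j t))

/-!
Split `T n m k t` according to whether `τ (k - 1)` and `τ k` are adjacent. The adjacent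
sequences form `T n m (k - 1) t`, which is empty for `k = 1` because `τ 0 = 0` while `t ≥ m`.
The others are exactly the images of `T n m k (t - 1)` under shifting the block
`τ k, …, τ (m - 1)` one step to the right. Performing that shift one changepoint at a time,
from `τ (m - 1)` down to `τ k`, each move multiplies the weight by one factor of `Rfun`.
-/

open Finset Fin.NatCast

-- `τ : Fin (m + 1) → ℕ` is read as `fun i : ℕ => τ i` through the wrapping cast `ℕ → Fin (m + 1)`,
-- so only the values at `i ≤ m` carry information.
noncomputable def gfunNat (m : ℕ) (p : ℕ → ℕ → ℝ) (w : ℕ → ℝ) (σ : ℕ → ℕ) : ℝ :=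
  (∏ i ∈ range m, ∏ x ∈ Ioc (σ i) (σ (i + 1)), p (i + 1) x) * ∏ i ∈ Ioo 0 m, w (σ i)

section gfunNat

variable {m : ℕ} {p : ℕ → ℕ → ℝ} {w : ℕ → ℝ}

theorem gfun_eq_gfunNat (τ : Fin (m + 1) → ℕ) :
    gfun m p w τ = gfunNat m p w (fun i => τ i) := by
  have hw : ∏ i ∈ Ioo (0 : Fin (m + 1)) (Fin.last m), w (τ i)
      = ∏ i ∈ Ioo 0 m, w (τ i) := by
    have hIoo : Ioo 0 m = (Ioo (0 : Fin (m + 1)) (Fin.last m)).map Fin.valEmbedding := by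
      rw [Fin.map_valEmbedding_Ioo, Fin.val_zero, Fin.val_last]
    rw [hIoo, prod_map]
    simp
  rw [gfun, gfunNat, hw, ← Fin.prod_univ_eq_prod_range]
  simp

theorem gfunNat_congr {σ σ' : ℕ → ℕ} (h : ∀ i ≤ m, σ' i = σ i) :
    gfunNat m p w σ' = gfunNat m p w σ := by
  unfold gfunNat
  congr 1
  · refine prod_congr rfl fun i hi => ?_
    rw [mem_range] at hi
    rw [h i hi.le, h (i + 1) hi]
  · refine prod_congr rfl fun i hi => ?_
    rw [mem_Ioo] at hi
    rw [h i hi.2.le]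

/-- Moving the single changepoint `σ j` one step to the right transfers the observation
`σ j + 1` from segment `j + 1` to segment `j`. -/
theorem gfunNat_mul_of_succ_at {σ σ' : ℕ → ℕ} {j : ℕ} (hj : 0 < j) (hjm : j < m)
    (hle : σ (j - 1) ≤ σ j) (hlt : σ j < σ (j + 1))
    (hσ' : ∀ i ≤ m, i ≠ j → σ' i = σ i) (hσ'j : σ' j = σ j + 1) :
    gfunNat m p w σ' * (p (j + 1) (σ j + 1) * w (σ j)) =
      gfunNat m p w σ * (p j (σ j + 1) * w (σ j + 1)) := by
  set seg : (ℕ → ℕ) → ℕ → ℝ := fun σ i => ∏ x ∈ Ioc (σ i) (σ (i + 1)), p (i + 1) x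
  have hj1 : j - 1 + 1 = j := Nat.sub_add_cancel hj
  have hsplit : ∀ σ : ℕ → ℕ, ∏ i ∈ range m, seg σ i
      = seg σ j * (seg σ (j - 1) * ∏ i ∈ ((range m).erase j).erase (j - 1), seg σ i) := by
    intro σ
    rw [mul_prod_erase _ _ (by simp only [mem_erase, mem_range]; omega),
      mul_prod_erase _ _ (mem_range.2 hjm)]
  have hrest : ∏ i ∈ ((range m).erase j).erase (j - 1), seg σ' i
      = ∏ i ∈ ((range m).erase j).erase (j - 1), seg σ i := by
    refine prod_congr rfl fun i hi => ?_
    simp only [mem_erase, mem_range] at hi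
    simp only [seg, hσ' i (by omega) (by omega), hσ' (i + 1) (by omega) (by omega)]
  have hleft : seg σ' (j - 1) = seg σ (j - 1) * p j (σ j + 1) := by
    simp only [seg, hj1, hσ' (j - 1) (by omega) (by omega), hσ'j]
    exact prod_Ioc_succ_top hle _
  have hright : seg σ j = p (j + 1) (σ j + 1) * seg σ' j := by
    simp only [seg, hσ'j, hσ' (j + 1) (by omega) (by omega)]
    rw [← insert_Ioc_add_one_left_eq_Ioc hlt, prod_insert (by simp)]
  have hw : (∏ i ∈ Ioo 0 m, w (σ' i)) * w (σ j) = (∏ i ∈ Ioo 0 m, w (σ i)) * w (σ j + 1) := by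
    have hjmem : j ∈ Ioo 0 m := mem_Ioo.2 ⟨hj, hjm⟩
    rw [← mul_prod_erase _ _ hjmem, ← mul_prod_erase _ (fun i => w (σ i)) hjmem, hσ'j,
      prod_congr rfl fun i hi => by
        simp only [mem_erase, mem_Ioo] at hi; rw [hσ' i (by omega) hi.1]]
    ring
  unfold gfunNat
  rw [hsplit, hsplit, hrest, hleft, hright]
  linear_combination (seg σ' j * seg σ (j - 1) * ∏ i ∈ ((range m).erase j).erase (j - 1),
    seg σ i) * p (j + 1) (σ j + 1) * p j (σ j + 1) * hw

theorem gfunNat_mul_of_shift {σ σ' : ℕ → ℕ} {k : ℕ} (hσ : ∀ i < m, σ i < σ (i + 1))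
    (hk : 0 < k) (hkm : k ≤ m)
    (hσ' : ∀ i ≤ m, σ' i = if k ≤ i ∧ i < m then σ i + 1 else σ i) :
    gfunNat m p w σ' * ∏ j ∈ Ico k m, p (j + 1) (σ j + 1) * w (σ j) =
      gfunNat m p w σ * ∏ j ∈ Ico k m, p j (σ j + 1) * w (σ j + 1) := by
  induction hkm using Nat.decreasingInduction generalizing σ' with
  | self =>
    rw [gfunNat_congr fun i hi => by rw [hσ' i hi, if_neg (by omega)]]
    simp
  | of_succ k hkm ih =>
    set σ'' : ℕ → ℕ := fun i => if k + 1 ≤ i ∧ i < m then σ i + 1 else σ i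
    have hσ''k : σ'' k = σ k := if_neg (by omega)
    have hprev : σ'' (k - 1) ≤ σ'' k := by
      have := hσ (k - 1) (by omega)
      rw [Nat.sub_add_cancel hk] at this
      simp only [σ'']
      split_ifs <;> omega
    have hnext : σ'' k < σ'' (k + 1) := by
      have := hσ k hkm
      simp only [σ'']
      split_ifs <;> omega
    have hstep := gfunNat_mul_of_succ_at (p := p) (w := w) (σ' := σ') hk hkm hprev hnext
      (fun i hi hik => by simp only [σ'', hσ' i hi]; split_ifs <;> omega)
      (by simp only [σ'', hσ' k (by omega)]; split_ifs <;> omega)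
    rw [hσ''k] at hstep
    rw [prod_eq_prod_Ico_succ_bot hkm, prod_eq_prod_Ico_succ_bot hkm]
    linear_combination (∏ j ∈ Ico (k + 1) m, p (j + 1) (σ j + 1) * w (σ j)) * hstep +
      p k (σ k + 1) * w (σ k + 1) * ih (by omega) (fun i _ => rfl)

end gfunNat

theorem Fin.strictMono_iff_natCast_lt_succ {α : Type*} [Preorder α] {m : ℕ}
    {τ : Fin (m + 1) → α} : StrictMono τ ↔ ∀ i < m, τ i < τ (i + 1 : ℕ) := by
  have hcast : ∀ i (hi : i < m), (⟨i, hi⟩ : Fin m).castSucc = (i : Fin (m + 1)) ∧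
      (⟨i, hi⟩ : Fin m).succ = (i + 1 : ℕ) := fun i hi =>
    ⟨(Fin.natCast_eq_mk (by omega)).symm, (Fin.natCast_eq_mk (by omega)).symm⟩
  rw [Fin.strictMono_iff_lt_succ]
  refine ⟨fun h i hi => ?_, fun h ⟨i, hi⟩ => ?_⟩
  · simpa only [hcast i hi] using h ⟨i, hi⟩
  · simpa only [hcast i hi] using h i hi

theorem mem_CP_iff {n m : ℕ} {τ : Fin (m + 1) → ℕ} :
    τ ∈ CP n m ↔ (∀ i < m, τ i < τ (i + 1 : ℕ)) ∧ τ (0 : ℕ) = 0 ∧ τ (m : ℕ) = n := by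
  rw [CP, Set.mem_ofPred_eq, Fin.strictMono_iff_natCast_lt_succ, Fin.natCast_eq_last,
    Nat.cast_zero]

theorem CP_finite (n m : ℕ) : (CP n m).Finite :=
  (Set.Finite.pi' fun _ => Set.finite_Iic n).subset fun _ hτ i =>
    hτ.2.2 ▸ hτ.1.monotone (Fin.le_last i)

theorem eq_sub_of_add_one_eq {f : ℕ → ℕ} {k l t : ℕ} (hl : f l = t)
    (hf : ∀ i, k ≤ i → i < l → f (i + 1) = f i + 1) {j : ℕ} (hkj : k ≤ j) (hjl : j ≤ l) :
    f j = t - (l - j) := by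
  induction hjl using Nat.decreasingInduction with
  | self => simpa using hl
  | of_succ j hj ih =>
    have := hf j hkj hj
    have := ih (by omega)
    omega

theorem mem_T_iff {n m k t : ℕ} {τ : Fin (m + 1) → ℕ} (hkm : k < m) (hmt : m ≤ t + 1) :
    τ ∈ T n m k t ↔ τ ∈ CP n m ∧ ∀ j, k ≤ j → j < m → τ j = t - (m - 1 - j) := by
  refine ⟨fun ⟨hcp, hlast, hcons⟩ => ⟨hcp, fun j hkj hjm => ?_⟩,
    fun ⟨hcp, hv⟩ => ⟨hcp, ?_, fun i hki him => ?_⟩⟩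
  · exact eq_sub_of_add_one_eq (f := fun i : ℕ => τ i) hlast
      (fun i hki hil => hcons i hki (by omega)) hkj (by omega)
  · rw [hv (m - 1) (by omega) (by omega)]
    omega
  · rw [hv i hki (by omega), hv (i + 1) (by omega) him]
    omega

theorem T_finite (n m k t : ℕ) : (T n m k t).Finite :=
  (CP_finite n m).subset fun _ h => h.1

theorem T_zero_eq_empty {n m t : ℕ} (hm : 0 < m) (hmt : m ≤ t) : T n m 0 t = ∅ := by
  refine Set.eq_empty_of_forall_notMem fun τ hτ => ?_
  obtain ⟨hcp, hv⟩ := (mem_T_iff hm (by omega)).1 hτ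
  have := hv 0 le_rfl hm
  rw [(mem_CP_iff.1 hcp).2.1] at this
  omega

theorem T_inter_adjacent {n m k t : ℕ} (hk : 0 < k) (hkm : k < m) (hmt : m ≤ t + 1) :
    T n m k t ∩ {τ | τ (k - 1 : ℕ) + 1 = τ k} = T n m (k - 1) t := by
  ext τ
  simp only [Set.mem_inter_iff, Set.mem_ofPred_eq, mem_T_iff hkm hmt,
    mem_T_iff (show k - 1 < m by omega) hmt]
  constructor
  · rintro ⟨⟨hcp, hv⟩, hadj⟩
    refine ⟨hcp, fun j hj hjm => ?_⟩
    rcases (show j = k - 1 ∨ k ≤ j by omega) with rfl | hkj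
    · have := hv k le_rfl hkm
      omega
    · exact hv j hkj hjm
  · rintro ⟨hcp, hv⟩
    refine ⟨⟨hcp, fun j hkj hjm => hv j (by omega) hjm⟩, ?_⟩
    rw [hv (k - 1) le_rfl (by omega), hv k (by omega) hkm]
    omega

def shiftBlock (m k : ℕ) (τ : Fin (m + 1) → ℕ) : Fin (m + 1) → ℕ :=
  fun j => if k ≤ (j : ℕ) ∧ (j : ℕ) < m then τ j + 1 else τ j

section shiftBlock

variable {n m k t : ℕ}

theorem shiftBlock_natCast (τ : Fin (m + 1) → ℕ) {i : ℕ} (hi : i ≤ m) :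
    shiftBlock m k τ i = if k ≤ i ∧ i < m then τ i + 1 else τ i := by
  simp only [shiftBlock, Fin.val_cast_of_lt (Nat.lt_succ_of_le hi)]

theorem shiftBlock_injective : Function.Injective (shiftBlock m k) := by
  intro σ τ h
  funext j
  have := congrFun h j
  simp only [shiftBlock] at this
  split_ifs at this <;> omega

theorem mapsTo_shiftBlock (hk : 0 < k) (hkm : k < m) (hmt : m ≤ t) (htn : t < n) :
    Set.MapsTo (shiftBlock m k) (T n m k (t - 1)) (T n m k t \ {τ | τ (k - 1 : ℕ) + 1 = τ k}) := by
  intro σ hσ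
  obtain ⟨hcp, hv⟩ := (mem_T_iff hkm (by omega)).1 hσ
  obtain ⟨hmono, h0, hlast⟩ := mem_CP_iff.1 hcp
  refine ⟨(mem_T_iff hkm (by omega)).2 ⟨mem_CP_iff.2 ⟨fun i hi => ?_, ?_, ?_⟩, fun j hkj hjm => ?_⟩,
    fun hadj => ?_⟩
  · have := hmono i hi
    have hvi := hv i
    have hlast' : i + 1 = m → σ (i + 1 : ℕ) = n := by rintro rfl; exact hlast
    rw [shiftBlock_natCast σ hi.le, shiftBlock_natCast σ (show i + 1 ≤ m from hi)]
    split_ifs <;> omega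
  · rw [shiftBlock_natCast σ (Nat.zero_le m), if_neg (by omega), h0]
  · rw [shiftBlock_natCast σ le_rfl, if_neg (by omega), hlast]
  · rw [shiftBlock_natCast σ hjm.le, if_pos ⟨hkj, hjm⟩, hv j hkj hjm]
    omega
  · have := hmono (k - 1) (by omega)
    rw [Nat.sub_add_cancel hk] at this
    rw [Set.mem_ofPred_eq, shiftBlock_natCast σ (by omega), shiftBlock_natCast σ hkm.le,
      if_neg (by omega), if_pos ⟨le_rfl, hkm⟩] at hadj
    omega

theorem surjOn_shiftBlock (hk : 0 < k) (hkm : k < m) (hmt : m ≤ t) :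
    Set.SurjOn (shiftBlock m k) (T n m k (t - 1))
      (T n m k t \ {τ | τ (k - 1 : ℕ) + 1 = τ k}) := by
  rintro τ ⟨hτ, hnadj⟩
  obtain ⟨hcp, hv⟩ := (mem_T_iff hkm (by omega)).1 hτ
  obtain ⟨hmono, h0, hlast⟩ := mem_CP_iff.1 hcp
  set σ : Fin (m + 1) → ℕ := fun j => if k ≤ (j : ℕ) ∧ (j : ℕ) < m then τ j - 1 else τ j
  have hσ : ∀ i ≤ m, σ i = if k ≤ i ∧ i < m then τ i - 1 else τ i := fun i hi => by
    simp only [σ, Fin.val_cast_of_lt (Nat.lt_succ_of_le hi)]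
  have hgap : τ (k - 1 : ℕ) + 1 < τ k := by
    have := hmono (k - 1) (by omega)
    rw [Nat.sub_add_cancel hk] at this
    rw [Set.mem_ofPred_eq] at hnadj
    omega
  refine ⟨σ, (mem_T_iff hkm (by omega)).2 ⟨mem_CP_iff.2 ⟨fun i hi => ?_, ?_, ?_⟩,
    fun j hkj hjm => ?_⟩, ?_⟩
  · have := hmono i hi
    have hvi := hv i
    have hvi' := hv (i + 1)
    have hgap' : i + 1 = k → τ i + 1 < τ (i + 1 : ℕ) := by
      rintro h
      rwa [← h, Nat.add_sub_cancel] at hgap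
    rw [hσ i hi.le, hσ (i + 1) (show i + 1 ≤ m from hi)]
    split_ifs <;> omega
  · rw [hσ 0 (Nat.zero_le m), if_neg (by omega), h0]
  · rw [hσ m le_rfl, if_neg (by omega), hlast]
  · rw [hσ j hjm.le, if_pos ⟨hkj, hjm⟩, hv j hkj hjm]
    omega
  · funext j
    have hvj := hv j
    rw [Fin.cast_val_eq_self] at hvj
    simp only [shiftBlock, σ]
    split_ifs <;> omega

end shiftBlock

theorem gfun_shiftBlock {n m k t : ℕ} {p : ℕ → ℕ → ℝ} {w : ℕ → ℝ} (hp : ∀ i j, p i j ≠ 0)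
    (hw : ∀ i, w i ≠ 0) (hk : 0 < k) (hkm : k < m) (hmt : m ≤ t) {τ : Fin (m + 1) → ℕ}
    (hτ : τ ∈ T n m k (t - 1)) :
    gfun m p w (shiftBlock m k τ) = gfun m p w τ * Rfun m p w k (t - 1) := by
  obtain ⟨hcp, hv⟩ := (mem_T_iff hkm (by omega)).1 hτ
  have hb : ∀ j ∈ Ico k m, b m j (t - 1) = τ j := fun j hj => by
    rw [mem_Ico] at hj
    rw [b, hv j hj.1 hj.2]
  have hden : ∏ j ∈ Ico k m, p (j + 1) (τ j + 1) * w (τ j) ≠ 0 :=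
    prod_ne_zero_iff.2 fun _ _ => mul_ne_zero (hp _ _) (hw _)
  rw [Rfun, prod_congr rfl fun j hj => by rw [hb j hj], prod_div_distrib, mul_div_assoc',
    eq_div_iff hden, gfun_eq_gfunNat, gfun_eq_gfunNat]
  exact gfunNat_mul_of_shift (mem_CP_iff.1 hcp).1 hk hkm.le fun i hi => shiftBlock_natCast τ hi

theorem stmt15_general (n m k t : ℕ)
    (p : ℕ → ℕ → ℝ) (w : ℕ → ℝ) (hp : ∀ i j, p i j ≠ 0) (hw : ∀ i, w i ≠ 0)
    (hk : 1 ≤ k) (hkm : k < m) (hmt : m ≤ t) (htn : t < n) :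
    (∑ᶠ τ ∈ T n m k t, gfun m p w τ) =
      (if k - 1 = 0 then 0 else ∑ᶠ τ ∈ T n m (k - 1) t, gfun m p w τ) +
        (∑ᶠ τ ∈ T n m k (t - 1), gfun m p w τ) * Rfun m p w k (t - 1) := by
  have hbij : Set.BijOn (shiftBlock m k) (T n m k (t - 1))
      (T n m k t \ {τ | τ (k - 1 : ℕ) + 1 = τ k}) :=
    ⟨mapsTo_shiftBlock hk hkm hmt htn, shiftBlock_injective.injOn, surjOn_shiftBlock hk hkm hmt⟩
  rw [← finsum_mem_inter_add_sdiff {τ | τ (k - 1 : ℕ) + 1 = τ k} (T_finite n m k t),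
    T_inter_adjacent hk hkm (by omega),
    ← finsum_mem_eq_of_bijOn _ hbij fun τ hτ => (gfun_shiftBlock hp hw hk hkm hmt hτ).symm,
    finsum_mem_mul]
  split_ifs with hk1
  · rw [hk1, T_zero_eq_empty (by omega) hmt, finsum_mem_empty]
  · rfl

/-- Core recurrence (Theorem 2 of the paper): with
`L k t = Σ_{τ ∈ T k t} (gfun m p w) τ` for `1 ≤ k < m` and `L 0 t = 0`, one has
`L k t = L (k-1) t + L k (t-1) * R k (t-1)` for `1 ≤ k < m` and `m ≤ t < n`. -/
theorem stmt15 (n m k t : ℕ) (hm : 2 ≤ m) (hmn : m ≤ n)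
    (p : ℕ → ℕ → ℝ) (w : ℕ → ℝ) (hp : ∀ i j, p i j ≠ 0) (hw : ∀ i, w i ≠ 0)
    (hk : 1 ≤ k) (hkm : k < m) (hmt : m ≤ t) (htn : t < n) :
    (∑ᶠ τ ∈ T n m k t, gfun m p w τ) =
      (if k - 1 = 0 then 0 else ∑ᶠ τ ∈ T n m (k - 1) t, gfun m p w τ) +
        (∑ᶠ τ ∈ T n m k (t - 1), gfun m p w τ) * Rfun m p w k (t - 1) :=
  stmt15_general n m k t p w hp hw hk hkm hmt htn
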